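/- arXiv:1009.5499 — 4 statements merged into one kernel-verified Lean document; each statement's English description precedes it below -/
import Mathlib

section
/- Let α₁, α₂ ∈ [0,1] with α₁ + α₂ ≤ 1, let H : [−1,1] → [0,1], let Φ̃ ∈ [−1,1], and set D(y) = 1 − y². If y, y⋆ ∈ [−1,1] and η ∈ ℝ satisfies |η| ≤ (1 − α₁ − α₂)/2, then the post-interaction value y' = (1 − α₁ H(y) − α₂) y + α₁ H(y) y⋆ + α₂ Φ̃ + (1 − y²) η satisfies −1 ≤ y' ≤ 1. -/
/-- The binary interaction rule for the chartists' investment propensity preserves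
the interval [-1,1] when the diffusion function is D(y) = 1 - y² and the random
fluctuation satisfies |η| ≤ (1 - α₁ - α₂)/2. -/
theorem stmt_1 (α₁ α₂ : ℝ) (hα₁ : α₁ ∈ Set.Icc (0 : ℝ) 1) (hα₂ : α₂ ∈ Set.Icc (0 : ℝ) 1)
    (hα : α₁ + α₂ ≤ 1)
    (H : ℝ → ℝ) (hH : ∀ y ∈ Set.Icc (-1 : ℝ) 1, H y ∈ Set.Icc (0 : ℝ) 1)
    (Φt : ℝ) (hΦt : Φt ∈ Set.Icc (-1 : ℝ) 1)
    (y ystar : ℝ) (hy : y ∈ Set.Icc (-1 : ℝ) 1) (hystar : ystar ∈ Set.Icc (-1 : ℝ) 1)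
    (η : ℝ) (hη : |η| ≤ (1 - α₁ - α₂) / 2) :
    (1 - α₁ * H y - α₂) * y + α₁ * H y * ystar + α₂ * Φt + (1 - y ^ 2) * η
       ∈ Set.Icc (-1 : ℝ) 1 := by
  obtain ⟨hy1, hy2⟩ := hy
  obtain ⟨hs1, hs2⟩ := hystar
  obtain ⟨hp1, hp2⟩ := hΦt
  obtain ⟨ha1, ha2⟩ := hα₁
  obtain ⟨hb1, hb2⟩ := hα₂
  obtain ⟨hH1, hH2⟩ := hH y ⟨hy1, hy2⟩
  obtain ⟨he1, he2⟩ := abs_le.mp hη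
  have hc : 0 ≤ 1 - α₁ * H y - α₂ := by nlinarith [mul_nonneg ha1 (by linarith : (0:ℝ) ≤ 1 - H y)]
  constructor
  · nlinarith [mul_nonneg (mul_nonneg ha1 hH1) (by linarith : ystar + 1 ≥ 0),
      mul_nonneg hb1 (by linarith : Φt + 1 ≥ 0),
      mul_nonneg (mul_nonneg (by linarith : 0 ≤ 1 - y) (by linarith : 0 ≤ 1 + y)) (by linarith : 0 ≤ η + (1 - α₁ - α₂)/2),
      mul_nonneg hc (by linarith : 0 ≤ 1 + y),
      mul_nonneg (mul_nonneg ha1 (by linarith : 0 ≤ 1 - H y)) (by linarith : 0 ≤ 1 + y),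
      mul_nonneg (by linarith : 0 ≤ 1 - α₁ - α₂) (sq_nonneg y),
      mul_nonneg (by linarith : 0 ≤ (1 - α₁ - α₂)/2) (sq_nonneg (1 - y))]
  · nlinarith [mul_nonneg (mul_nonneg ha1 hH1) (by linarith : 1 - ystar ≥ 0),
      mul_nonneg hb1 (by linarith : 1 - Φt ≥ 0),
      mul_nonneg (mul_nonneg (by linarith : 0 ≤ 1 - y) (by linarith : 0 ≤ 1 + y)) (by linarith : 0 ≤ (1 - α₁ - α₂)/2 - η),
      mul_nonneg hc (by linarith : 0 ≤ 1 - y),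
      mul_nonneg (mul_nonneg ha1 (by linarith : 0 ≤ 1 - H y)) (by linarith : 0 ≤ 1 - y),
      mul_nonneg (by linarith : 0 ≤ 1 - α₁ - α₂) (sq_nonneg y),
      mul_nonneg (by linarith : 0 ≤ (1 - α₁ - α₂)/2) (sq_nonneg (1 + y))]
end

section
/- Let β > 0, t_C > 0, γ > 0, S_F ≥ 0, ρ_C, ρ_F ≥ 0 with β(ρ_C t_C + ρ_F γ) < 1, and let Y ∈ [−1,1]. If s ≥ 0 and η ∈ ℝ satisfies |η| ≤ 1 − β(ρ_C t_C + ρ_F γ), then the post-interaction price s' = s + β(ρ_C t_C Y s + ρ_F γ (S_F − s)) + η s satisfies s' ≥ 0. -/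
/-- The microscopic price update rule preserves nonnegativity of the price when
|η| ≤ 1 - β(ρ_C t_C + ρ_F γ). -/
theorem stmt_2 (β tC γ SF ρC ρF Y : ℝ)
    (hβ : 0 < β) (htC : 0 < tC) (hγ : 0 < γ) (hSF : 0 ≤ SF)
    (hρC : 0 ≤ ρC) (hρF : 0 ≤ ρF)
    (hsmall : β * (ρC * tC + ρF * γ) < 1)
    (hY : Y ∈ Set.Icc (-1 : ℝ) 1)
    (s η : ℝ) (hs : 0 ≤ s) (hη : |η| ≤ 1 - β * (ρC * tC + ρF * γ)) :
    0 ≤ s + β * (ρC * tC * Y * s + ρF * γ * (SF - s)) + η * s := by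
  obtain ⟨hY1, hY2⟩ := hY
  obtain ⟨h1, h2⟩ := abs_le.mp hη
  nlinarith [mul_nonneg (mul_nonneg hρF hγ.le) hSF, mul_nonneg hβ.le (mul_nonneg (mul_nonneg hρF hγ.le) hSF), mul_nonneg (mul_nonneg hρC htC.le) hs, mul_nonneg hβ.le (mul_nonneg (mul_nonneg hρC htC.le) (mul_nonneg hs (by linarith : 0 ≤ Y + 1)))]
end

section
/- Let f : [−1,1] → [0,∞) be integrable with mass ρ_C = ∫₋₁¹ f(y) dy and first moment ρ_C Y = ∫₋₁¹ y f(y) dy, let Θ be a probability density on ℝ with zero mean, let H : [−1,1] → [0,1], D : [−1,1] → ℝ, Φ̃ ∈ [−1,1], and α₁, α₂ ∈ [0,1]. With y' = (1 − α₁ H(y) − α₂) y + α₁ H(y) y⋆ + α₂ Φ̃ + D(y) η, the first moment of the chartist collision operator satisfies ∫∫∫∫ Θ(η) Θ(η⋆) f(y) f(y⋆) (y' − y) dη dη⋆ dy⋆ dy = α₁ ( ρ_C Y ∫₋₁¹ H(y) f(y) dy − ρ_C ∫₋₁¹ H(y) y f(y) dy ) + α₂ ρ_C² ( Φ̃ −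 Y ). -/
open MeasureTheory

/-- First-moment identity for the chartist collision operator: averaging the
interaction increment y' − y against the mean-zero fluctuation densities and the
chartist density f yields
α₁ (ρ_C Y ∫ H f − ρ_C ∫ H y f) + α₂ ρ_C² (Φ̃ − Y). -/
theorem stmt_4 (α₁ α₂ ρC Y Φt : ℝ)
    (hα₁ : α₁ ∈ Set.Icc (0 : ℝ) 1) (hα₂ : α₂ ∈ Set.Icc (0 : ℝ) 1)
    (hΦt : Φt ∈ Set.Icc (-1 : ℝ) 1)
    (H D f Θ : ℝ → ℝ)
    (hH : ∀ y ∈ Set.Icc (-1 : ℝ) 1, H y ∈ Set.Icc (0 : ℝ) 1)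
    (hf : ∀ y ∈ Set.Icc (-1 : ℝ) 1, 0 ≤ f y)
    (hfint : IntegrableOn f (Set.Icc (-1) 1))
    (hmass : ∫ y in Set.Icc (-1 : ℝ) 1, f y = ρC)
    (hmom : ∫ y in Set.Icc (-1 : ℝ) 1, y * f y = ρC * Y)
    (hΘpos : ∀ η, 0 ≤ Θ η) (hΘint : Integrable Θ) (hΘmass : ∫ η, Θ η = 1)
    (hΘm1int : Integrable (fun η => η * Θ η)) (hΘmean : ∫ η, η * Θ η = 0)
    (hHfint : IntegrableOn (fun y => H y * f y) (Set.Icc (-1) 1))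
    (hHyfint : IntegrableOn (fun y => H y * y * f y) (Set.Icc (-1) 1))
    (hDfint : IntegrableOn (fun y => D y * f y) (Set.Icc (-1) 1)) :
    ∫ y in Set.Icc (-1 : ℝ) 1, ∫ ystar in Set.Icc (-1 : ℝ) 1, ∫ η : ℝ, ∫ ηstar : ℝ,
        Θ η * Θ ηstar * f y * f ystar *
          (((1 - α₁ * H y - α₂) * y + α₁ * H y * ystar + α₂ * Φt + D y * η) - y)
      = α₁ * (ρC * Y * (∫ y in Set.Icc (-1 : ℝ) 1, H y * f y)
              - ρC * (∫ y in Set.Icc (-1 : ℝ) 1, H y * y * f y))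
        + α₂ * ρC ^ 2 * (Φt - Y) := by
  -- y * f y is integrable on the interval
  have hyfint : IntegrableOn (fun y => y * f y) (Set.Icc (-1 : ℝ) 1) := by
    refine Integrable.mono' hfint ?_ ?_
    · exact (measurable_id.aemeasurable.aestronglyMeasurable.mul
        hfint.aestronglyMeasurable)
    · filter_upwards [ae_restrict_mem measurableSet_Icc] with y hy
      rw [norm_mul]
      have h1 : |y| ≤ 1 := abs_le.mpr ⟨hy.1, hy.2⟩
      calc ‖y‖ * ‖f y‖ ≤ 1 * ‖f y‖ := by
            exact mul_le_mul_of_nonneg_right h1 (norm_nonneg _)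
        _ = ‖f y‖ := one_mul _
        _ = f y := Real.norm_of_nonneg (hf y hy)
  -- step 1: compute the inner double integral over η, ηstar
  have key : ∀ A B c : ℝ,
      (∫ η : ℝ, ∫ ηstar : ℝ, Θ η * Θ ηstar * c * (A + B * η)) = c * A := by
    intro A B c
    have h1 : ∀ η : ℝ,
        (∫ ηstar : ℝ, Θ η * Θ ηstar * c * (A + B * η))
          = Θ η * c * (A + B * η) := by
      intro η
      calc (∫ ηstar : ℝ, Θ η * Θ ηstar * c * (A + B * η))
          = ∫ ηstar : ℝ, (Θ η * c * (A + B * η)) * Θ ηstar := by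
            congr 1; funext ηstar; ring
        _ = (Θ η * c * (A + B * η)) * ∫ ηstar : ℝ, Θ ηstar :=
            integral_const_mul _ _
        _ = Θ η * c * (A + B * η) := by rw [hΘmass, mul_one]
    simp_rw [h1]
    calc (∫ η : ℝ, Θ η * c * (A + B * η))
        = ∫ η : ℝ, ((c * A) * Θ η + (c * B) * (η * Θ η)) := by
          congr 1; funext η; ring
      _ = (∫ η : ℝ, (c * A) * Θ η) + ∫ η : ℝ, (c * B) * (η * Θ η) :=
          integral_add (hΘint.const_mul _) (hΘm1int.const_mul _)
      _ = (c * A) * (∫ η : ℝ, Θ η) + (c * B) * (∫ η : ℝ, η * Θ η) := by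
          rw [integral_const_mul, integral_const_mul]
      _ = c * A := by rw [hΘmass, hΘmean]; ring
  have step1 : ∀ y ystar : ℝ,
      (∫ η : ℝ, ∫ ηstar : ℝ, Θ η * Θ ηstar * f y * f ystar *
          (((1 - α₁ * H y - α₂) * y + α₁ * H y * ystar + α₂ * Φt + D y * η) - y))
        = (f y * ((-(α₁ * H y) - α₂) * y + α₂ * Φt)) * f ystar
            + (f y * (α₁ * H y)) * (ystar * f ystar) := by
    intro y ystar
    have h := key ((1 - α₁ * H y - α₂) * y + α₁ * H y * ystar + α₂ * Φt - y)
      (D y) (f y * f ystar)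
    calc (∫ η : ℝ, ∫ ηstar : ℝ, Θ η * Θ ηstar * f y * f ystar *
          (((1 - α₁ * H y - α₂) * y + α₁ * H y * ystar + α₂ * Φt + D y * η) - y))
        = ∫ η : ℝ, ∫ ηstar : ℝ, Θ η * Θ ηstar * (f y * f ystar) *
            (((1 - α₁ * H y - α₂) * y + α₁ * H y * ystar + α₂ * Φt - y)
              + D y * η) := by
          congr 1; funext η; congr 1; funext ηstar; ring
      _ = (f y * f ystar) *
            ((1 - α₁ * H y - α₂) * y + α₁ * H y * ystar + α₂ * Φt - y) := h
      _ = (f y * ((-(α₁ * H y) - α₂) * y + α₂ * Φt)) * f ystar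
            + (f y * (α₁ * H y)) * (ystar * f ystar) := by ring
  simp_rw [step1]
  -- step 2: integrate over ystar
  have step2 : ∀ y : ℝ,
      (∫ ystar in Set.Icc (-1 : ℝ) 1,
          ((f y * ((-(α₁ * H y) - α₂) * y + α₂ * Φt)) * f ystar
            + (f y * (α₁ * H y)) * (ystar * f ystar)))
        = (-(α₁ * ρC)) * (H y * y * f y) + (-(α₂ * ρC)) * (y * f y)
            + (α₂ * Φt * ρC) * f y + (α₁ * (ρC * Y)) * (H y * f y) := by
    intro y
    rw [integral_add ((hfint.const_mul _)) ((hyfint.const_mul _)),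
      integral_const_mul, integral_const_mul, hmass, hmom]
    ring
  simp_rw [step2]
  set μ := volume.restrict (Set.Icc (-1 : ℝ) 1)
  have I1 : Integrable (fun y => -(α₁ * ρC) * (H y * y * f y)) μ :=
    hHyfint.const_mul _
  have I2 : Integrable (fun y => -(α₂ * ρC) * (y * f y)) μ :=
    hyfint.const_mul _
  have I3 : Integrable (fun y => α₂ * Φt * ρC * f y) μ := hfint.const_mul _
  have I4 : Integrable (fun y => α₁ * (ρC * Y) * (H y * f y)) μ :=
    hHfint.const_mul _
  have I12 : Integrable (fun y => -(α₁ * ρC) * (H y * y * f y)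
      + -(α₂ * ρC) * (y * f y)) μ := I1.add I2
  have I123 : Integrable (fun y => -(α₁ * ρC) * (H y * y * f y)
      + -(α₂ * ρC) * (y * f y) + α₂ * Φt * ρC * f y) μ := I12.add I3
  rw [integral_add I123 I4, integral_add I12 I3, integral_add I1 I2,
    integral_const_mul, integral_const_mul, integral_const_mul, integral_const_mul,
    hmass, hmom]
  ring
end

section
/- Let α̃₁, α̃₂ > 0, λ > 0, Y⋆ ∈ (−1,1), set κ = (α̃₁ + α̃₂)/λ, and define on (−1,1) the function f^∞(y) = C₀ (1+y)^{−2 + κ Y⋆/2} (1−y)^{−2 − κ Y⋆/2} exp( − κ (1 − Y⋆ y)/(1 − y²) ) for any constant C₀ > 0. Then f^∞ satisfies, for every y ∈ (−1,1), the zero-flux stationary Fokker–Planck equation (λ/2) d/dy [ (1 − y²)² f^∞(y) ] = (α̃₁ + α̃₂) (Y⋆ − y) f^∞(y); in particular, f^∞ is a stationary solution of the Fokker–Planck equation ∂f/∂τ + ∂/∂y [ (α̃₁ + α̃₂)(Y⋆ − y) f ] = (λ/2) ∂²/∂y² [ (1 − y²)² f ]. -/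
/-!
With κ = (α̃₁ + α̃₂)/λ, on (−1, 1) one has (1 − y²)² f^∞ = C₀ exp Φ for the potential
Φ(y) = (κY⋆/2) (log(1 + y) − log(1 − y)) − κ (1 − Y⋆y)/(1 − y²), whose derivative is
Φ' = 2κ(Y⋆ − y)/(1 − y²)². Hence ((1 − y²)² f^∞)' = 2κ(Y⋆ − y) f^∞, which is the zero-flux
equation; differentiating it once more on the open interval gives the stationary equation.
-/

open Real Set Filter

noncomputable def stationaryDensity (κ Y C₀ z : ℝ) : ℝ :=
  C₀ * (1 + z) ^ (-2 + κ * Y / 2) * (1 - z) ^ (-2 - κ * Y / 2) *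
    exp (-κ * (1 - Y * z) / (1 - z ^ 2))

noncomputable def stationaryPotential (κ Y z : ℝ) : ℝ :=
  κ * Y / 2 * (log (1 + z) - log (1 - z)) - κ * (1 - Y * z) / (1 - z ^ 2)

lemma hasDerivAt_stationaryPotential (κ Y : ℝ) {y : ℝ} (hy : y ∈ Ioo (-1 : ℝ) 1) :
    HasDerivAt (stationaryPotential κ Y) (2 * κ * (Y - y) / (1 - y ^ 2) ^ 2) y := by
  obtain ⟨hy₁, hy₂⟩ := hy
  have hp : 1 + y ≠ 0 := by linarith
  have hm : 1 - y ≠ 0 := by linarith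
  have hD : 1 - y ^ 2 ≠ 0 := by nlinarith
  have hlogp := ((hasDerivAt_id' y).const_add 1).log hp
  have hlogm := ((hasDerivAt_id' y).const_sub 1).log hm
  have hquot := (((hasDerivAt_id' y).const_mul Y).const_sub 1 |>.const_mul κ).div
    ((hasDerivAt_pow 2 y).const_sub 1) hD
  refine (((hlogp.sub hlogm).const_mul (κ * Y / 2)).sub hquot).congr_deriv ?_
  field_simp
  ring

lemma sq_one_sub_sq_mul_stationaryDensity (κ Y C₀ : ℝ) {z : ℝ} (hz : z ∈ Ioo (-1 : ℝ) 1) :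
    (1 - z ^ 2) ^ 2 * stationaryDensity κ Y C₀ z = C₀ * exp (stationaryPotential κ Y z) := by
  obtain ⟨hz₁, hz₂⟩ := hz
  have hp : 0 < 1 + z := by linarith
  have hm : 0 < 1 - z := by linarith
  have ep : exp (log (1 + z) * 2) = (1 + z) ^ 2 := by
    rw [← rpow_def_of_pos hp]; norm_cast
  have em : exp (log (1 - z) * 2) = (1 - z) ^ 2 := by
    rw [← rpow_def_of_pos hm]; norm_cast
  have key : exp (log (1 + z) * 2) * exp (log (1 - z) * 2) *
      exp (log (1 + z) * (-2 + κ * Y / 2)) * exp (log (1 - z) * (-2 - κ * Y / 2)) =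
      exp (κ * Y / 2 * (log (1 + z) - log (1 - z))) := by
    simp only [← exp_add]; ring_nf
  rw [ep, em] at key
  rw [stationaryDensity, stationaryPotential, rpow_def_of_pos hp, rpow_def_of_pos hm,
    exp_sub, neg_mul, neg_div, exp_neg, ← key, div_eq_mul_inv]
  ring

lemma hasDerivAt_sq_one_sub_sq_mul_stationaryDensity (κ Y C₀ : ℝ) {y : ℝ}
    (hy : y ∈ Ioo (-1 : ℝ) 1) :
    HasDerivAt (fun z => (1 - z ^ 2) ^ 2 * stationaryDensity κ Y C₀ z)
      (2 * κ * (Y - y) * stationaryDensity κ Y C₀ y) y := by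
  have hD : 1 - y ^ 2 ≠ 0 := by nlinarith [hy.1, hy.2]
  have hexp := ((hasDerivAt_stationaryPotential κ Y hy).exp).const_mul C₀
  refine (hexp.congr_of_eventuallyEq ?_).congr_deriv ?_
  · filter_upwards [isOpen_Ioo.mem_nhds hy] with z hz
    exact sq_one_sub_sq_mul_stationaryDensity κ Y C₀ hz
  · rw [← mul_assoc, ← sq_one_sub_sq_mul_stationaryDensity κ Y C₀ hy]
    field_simp

lemma deriv_eq_const_mul_deriv_deriv_of_eqOn {s : Set ℝ} (hs : IsOpen s) {F J : ℝ → ℝ} (c : ℝ)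
    (h : EqOn (fun z => c * deriv F z) J s) {y : ℝ} (hy : y ∈ s) :
    deriv J y = c * deriv (deriv F) y := by
  rw [← (h.eventuallyEq_of_mem (hs.mem_nhds hy)).deriv_eq, deriv_const_mul_field]

theorem stmt_11_general (a₁ a₂ lam Ystar C₀ : ℝ) (hlam : 0 < lam) :
    ∀ y ∈ Set.Ioo (-1 : ℝ) 1,
      (lam / 2) *
          deriv (fun z : ℝ =>
            (1 - z ^ 2) ^ 2 *
              (C₀ * (1 + z) ^ (-2 + (a₁ + a₂) / lam * Ystar / 2)
                  * (1 - z) ^ (-2 - (a₁ + a₂) / lam * Ystar / 2)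
                  * Real.exp (-((a₁ + a₂) / lam) * (1 - Ystar * z) / (1 - z ^ 2)))) y
        = (a₁ + a₂) * (Ystar - y) *
            (C₀ * (1 + y) ^ (-2 + (a₁ + a₂) / lam * Ystar / 2)
                * (1 - y) ^ (-2 - (a₁ + a₂) / lam * Ystar / 2)
                * Real.exp (-((a₁ + a₂) / lam) * (1 - Ystar * y) / (1 - y ^ 2)))
      ∧ deriv (fun z : ℝ =>
            (a₁ + a₂) * (Ystar - z) *
              (C₀ * (1 + z) ^ (-2 + (a₁ + a₂) / lam * Ystar / 2)
                  * (1 - z) ^ (-2 - (a₁ + a₂) / lam * Ystar / 2)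
                  * Real.exp (-((a₁ + a₂) / lam) * (1 - Ystar * z) / (1 - z ^ 2)))) y
        = (lam / 2) *
            deriv (deriv (fun z : ℝ =>
              (1 - z ^ 2) ^ 2 *
                (C₀ * (1 + z) ^ (-2 + (a₁ + a₂) / lam * Ystar / 2)
                    * (1 - z) ^ (-2 - (a₁ + a₂) / lam * Ystar / 2)
                    * Real.exp (-((a₁ + a₂) / lam) * (1 - Ystar * z) / (1 - z ^ 2))))) y := by
  have zeroFlux : EqOn
      (fun z => lam / 2 * deriv (fun z => (1 - z ^ 2) ^ 2 *
        stationaryDensity ((a₁ + a₂) / lam) Ystar C₀ z) z)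
      (fun z => (a₁ + a₂) * (Ystar - z) * stationaryDensity ((a₁ + a₂) / lam) Ystar C₀ z)
      (Ioo (-1) 1) := by
    intro z hz
    dsimp only
    rw [(hasDerivAt_sq_one_sub_sq_mul_stationaryDensity _ Ystar C₀ hz).deriv]
    field_simp
  exact fun y hy => ⟨zeroFlux hy, deriv_eq_const_mul_deriv_deriv_of_eqOn isOpen_Ioo _ zeroFlux hy⟩

/-- The explicit stationary state of the chartist Fokker–Planck equation with
diffusion D(y) = 1 − y² satisfies the zero-flux relation
(λ/2) d/dy[(1−y²)² f^∞] = (α̃₁+α̃₂)(Y⋆−y) f^∞ on (−1,1); in particular it is a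
stationary solution of ∂f/∂τ + ∂_y[(α̃₁+α̃₂)(Y⋆−y)f] = (λ/2)∂²_y[(1−y²)²f]. -/
theorem stmt_11 (a₁ a₂ lam Ystar C₀ : ℝ)
    (ha₁ : 0 < a₁) (ha₂ : 0 < a₂) (hlam : 0 < lam)
    (hY : Ystar ∈ Set.Ioo (-1 : ℝ) 1) (hC₀ : 0 < C₀) :
    ∀ y ∈ Set.Ioo (-1 : ℝ) 1,
      (lam / 2) *
          deriv (fun z : ℝ =>
            (1 - z ^ 2) ^ 2 *
              (C₀ * (1 + z) ^ (-2 + (a₁ + a₂) / lam * Ystar / 2)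
                  * (1 - z) ^ (-2 - (a₁ + a₂) / lam * Ystar / 2)
                  * Real.exp (-((a₁ + a₂) / lam) * (1 - Ystar * z) / (1 - z ^ 2)))) y
        = (a₁ + a₂) * (Ystar - y) *
            (C₀ * (1 + y) ^ (-2 + (a₁ + a₂) / lam * Ystar / 2)
                * (1 - y) ^ (-2 - (a₁ + a₂) / lam * Ystar / 2)
                * Real.exp (-((a₁ + a₂) / lam) * (1 - Ystar * y) / (1 - y ^ 2)))
      ∧ deriv (fun z : ℝ =>
            (a₁ + a₂) * (Ystar - z) *
              (C₀ * (1 + z) ^ (-2 + (a₁ + a₂) / lam * Ystar / 2)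
                  * (1 - z) ^ (-2 - (a₁ + a₂) / lam * Ystar / 2)
                  * Real.exp (-((a₁ + a₂) / lam) * (1 - Ystar * z) / (1 - z ^ 2)))) y
        = (lam / 2) *
            deriv (deriv (fun z : ℝ =>
              (1 - z ^ 2) ^ 2 *
                (C₀ * (1 + z) ^ (-2 + (a₁ + a₂) / lam * Ystar / 2)
                    * (1 - z) ^ (-2 - (a₁ + a₂) / lam * Ystar / 2)
                    * Real.exp (-((a₁ + a₂) / lam) * (1 - Ystar * z) / (1 - z ^ 2))))) y :=
  stmt_11_general a₁ a₂ lam Ystar C₀ hlam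
end
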